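/- arXiv:1309.3695 — 3 statements merged into one kernel-verified Lean document; each statement's English description precedes it below -/
import Mathlib

section
/- If nonzero complex numbers a, c satisfy ℓa² + (ℓ+1)ac + ℓc² = 0 for some integer ℓ ≥ 2, then a/c is not a root of unity. -/
/-! If `z = a / c` were a root of unity, then `z` and `z⁻¹` would be algebraic integers, and
so would `z + z⁻¹`. The relation reads `ℓ z² + (ℓ + 1) z + ℓ = 0`, so `z + z⁻¹ = -(ℓ + 1) / ℓ`
is rational, and a rational algebraic integer lies in `ℤ`; but `ℓ ∤ ℓ + 1` for `ℓ ≥ 2`. -/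

theorem isIntegral_of_pow_eq_one {R A : Type*} [CommRing R] [Ring A] [Algebra R A] {z : A}
    {n : ℕ} (hn : 0 < n) (hz : z ^ n = 1) : IsIntegral R z :=
  IsIntegral.of_pow hn (hz ▸ isIntegral_one)

theorem exists_intCast_eq_of_ratCast_eq_add_inv {K : Type*} [Field K] [CharZero K] {z : K}
    {n : ℕ} (hn : 0 < n) (hz : z ^ n = 1) {q : ℚ} (hq : (q : K) = z + z⁻¹) :
    ∃ m : ℤ, (m : ℚ) = q := by
  have hsum : IsIntegral ℤ (z + z⁻¹) :=
    (isIntegral_of_pow_eq_one hn hz).add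
      (isIntegral_of_pow_eq_one hn (by rw [inv_pow, hz, inv_one]))
  rw [← hq, ← eq_ratCast (algebraMap ℚ K), isIntegral_algebraMap_iff (algebraMap ℚ K).injective]
    at hsum
  exact IsIntegrallyClosed.isIntegral_iff.mp hsum

theorem add_inv_eq_of_reciprocal_quadratic {K : Type*} [Field K] {p r z : K} (hp : p ≠ 0)
    (h : p * z ^ 2 + r * z + p = 0) : z + z⁻¹ = -r / p := by
  have hz : z ≠ 0 := by
    rintro rfl
    exact hp (by simpa using h)
  field_simp
  linear_combination h

theorem add_one_div_self_ne_intCast {ℓ : ℤ} (hℓ : 2 ≤ ℓ) (m : ℤ) : ((ℓ : ℚ) + 1) / ℓ ≠ m := by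
  intro h
  have hℓ0 : (ℓ : ℚ) ≠ 0 := by exact_mod_cast (by omega : ℓ ≠ 0)
  rw [div_eq_iff hℓ0] at h
  have hdvd : ℓ ∣ 1 := ⟨m - 1, by linarith [(by exact_mod_cast h : ℓ + 1 = m * ℓ)]⟩
  have := Int.le_of_dvd one_pos hdvd
  omega

theorem stmt_3_general (a c : ℂ) (hc : c ≠ 0) (ℓ : ℤ) (hℓ : 2 ≤ ℓ)
    (h : (ℓ : ℂ) * a ^ 2 + ((ℓ : ℂ) + 1) * a * c + (ℓ : ℂ) * c ^ 2 = 0) :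
    ¬ ∃ n : ℕ, 0 < n ∧ (a / c) ^ n = 1 := by
  rintro ⟨n, hn, hz⟩
  have hℓ0 : (ℓ : ℂ) ≠ 0 := by exact_mod_cast (by omega : ℓ ≠ 0)
  have hquad : (ℓ : ℂ) * (a / c) ^ 2 + ((ℓ : ℂ) + 1) * (a / c) + ℓ = 0 := by
    field_simp
    linear_combination h
  obtain ⟨m, hm⟩ := exists_intCast_eq_of_ratCast_eq_add_inv (q := -(((ℓ : ℚ) + 1) / ℓ)) hn hz
    (by push_cast; rw [add_inv_eq_of_reciprocal_quadratic hℓ0 hquad, neg_div])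
  exact add_one_div_self_ne_intCast hℓ (-m) (by push_cast; linarith)

theorem stmt_3 (a c : ℂ) (ha : a ≠ 0) (hc : c ≠ 0) (ℓ : ℤ) (hℓ : 2 ≤ ℓ)
    (h : (ℓ : ℂ) * a ^ 2 + ((ℓ : ℂ) + 1) * a * c + (ℓ : ℂ) * c ^ 2 = 0) :
    ¬ ∃ n : ℕ, 0 < n ∧ (a / c) ^ n = 1 :=
  stmt_3_general a c hc ℓ hℓ h
end

section
/- If a, c are nonzero complex numbers with ℓa² + (ℓ+1)ac + ℓc² = 0 for some integer ℓ ≥ 2, and r is a positive integer, then a^{2r} ≠ −c^{2r}. -/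
/-- Auxiliary integer sequence: `vseq ℓ n` equals `ℓ^n ((a/c)^n + (c/a)^n)`. -/
def vseq (ℓ : ℤ) : ℕ → ℤ
  | 0 => 2
  | 1 => -(ℓ + 1)
  | (n + 2) => -(ℓ + 1) * vseq ℓ (n + 1) - ℓ ^ 2 * vseq ℓ n

lemma vseq_spec (a c : ℂ) (ℓ : ℤ)
    (h : (ℓ : ℂ) * a ^ 2 + ((ℓ : ℂ) + 1) * a * c + (ℓ : ℂ) * c ^ 2 = 0) :
    ∀ n : ℕ, (ℓ : ℂ) ^ n * (a ^ (2 * n) + c ^ (2 * n)) = (vseq ℓ n : ℂ) * (a * c) ^ n := by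
  intro n
  induction n using Nat.twoStepInduction with
  | zero => simp [vseq]; ring
  | one =>
    simp only [vseq]
    push_cast
    linear_combination h
  | more n IH0 IH1 =>
    simp only [vseq]
    push_cast
    linear_combination ((ℓ : ℂ) * (a ^ 2 + c ^ 2)) * IH1 - (ℓ : ℂ) ^ 2 * (a * c) ^ 2 * IH0
      + ((vseq ℓ (n + 1) : ℂ)) * (a * c) ^ (n + 1) * h

lemma vseq_mod (ℓ : ℤ) : ∀ n : ℕ, ℓ ∣ vseq ℓ (n + 1) - (-1) ^ (n + 1) := by
  intro n
  induction n with
  | zero => simp [vseq]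
  | succ n IH =>
    obtain ⟨k, hk⟩ := IH
    refine ⟨-(ℓ + 1) * k - ℓ * vseq ℓ n - (-1) ^ (n + 1), ?_⟩
    have : vseq ℓ (n + 2) = -(ℓ + 1) * vseq ℓ (n + 1) - ℓ ^ 2 * vseq ℓ n := rfl
    rw [this]
    have hv : vseq ℓ (n + 1) = ℓ * k + (-1) ^ (n + 1) := by linarith
    rw [hv]; ring

theorem stmt_7 (a c : ℂ) (ha : a ≠ 0) (hc : c ≠ 0) (ℓ : ℤ) (hℓ : 2 ≤ ℓ)
    (h : (ℓ : ℂ) * a ^ 2 + ((ℓ : ℂ) + 1) * a * c + (ℓ : ℂ) * c ^ 2 = 0)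
    (r : ℕ) (hr : 0 < r) :
    a ^ (2 * r) ≠ -c ^ (2 * r) := by
  intro heq
  have hspec := vseq_spec a c ℓ h r
  rw [heq] at hspec
  have hzero : (vseq ℓ r : ℂ) * (a * c) ^ r = 0 := by
    rw [← hspec]; ring
  have hac : (a * c) ^ r ≠ 0 := pow_ne_zero _ (mul_ne_zero ha hc)
  have hv0 : (vseq ℓ r : ℂ) = 0 := by
    rcases mul_eq_zero.mp hzero with h' | h'
    · exact h'
    · exact absurd h' hac
  have hvz : vseq ℓ r = 0 := by exact_mod_cast hv0
  obtain ⟨m, rfl⟩ := Nat.exists_eq_succ_of_ne_zero hr.ne'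
  have hdvd := vseq_mod ℓ m
  rw [hvz] at hdvd
  have h1 : ℓ ∣ (-1 : ℤ) ^ (m + 1) := by simpa using hdvd
  have h2 : ℓ ∣ (1 : ℤ) := by
    have := h1.mul_right ((-1 : ℤ) ^ (m + 1))
    simpa [← pow_add, pow_mul, neg_one_sq] using this
  have := Int.le_of_dvd one_pos h2
  omega
end

section
/- The polynomial χ(t) = t⁶ + t⁵ − 2t³ + t + 1 is reciprocal (t⁶χ(1/t) = χ(t)), irreducible over ℚ, has exactly two roots on the unit circle, two roots of modulus > 1 (a non-real complex conjugate pair), and two roots of modulus < 1. -/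
open Polynomial Complex ComplexConjugate IntermediateField Module

/-! With `s = t + t⁻¹` one has `χ(t) = t³ P(s)` for the cubic `P(s) = s³ + s² - 3s - 4`, so the
roots of `χ` are the solutions of `t + t⁻¹ = s` for the three roots `s` of `P`. The cubic has a real
root `s₀ ∈ (9/5, 2)`, and the lower bound makes the discriminant of `P(s) / (s - s₀)` negative, so
the other two roots are non-real conjugates `s₁, s̄₁`. Since `|s₀| < 2`, the equation
`t + t⁻¹ = s₀` has two conjugate solutions on the unit circle; for non-real `s₁` the two solutions
`α, α⁻¹` are non-real and off the circle, and `s̄₁` contributes `ᾱ, ᾱ⁻¹`.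

For irreducibility take a root `β` on the unit circle. The field `ℚ(β)` contains `s₀ = β + β⁻¹`,
whose degree is 3 because `P` has no rational root, so `[ℚ(β) : ℚ]` is 3 or 6. It is not 3: then
`ℚ(β) = ℚ(s₀) ⊆ ℝ`, while `β` is not real. -/

lemma Complex.im_add_inv (w : ℂ) : (w + w⁻¹).im = w.im * (1 - (normSq w)⁻¹) := by
  rw [add_im, inv_im]; ring

lemma Complex.im_ne_zero_of_im_add_inv_ne_zero {w : ℂ} (h : (w + w⁻¹).im ≠ 0) : w.im ≠ 0 := by
  rw [im_add_inv] at h; exact left_ne_zero_of_mul h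

lemma Complex.norm_ne_one_of_im_add_inv_ne_zero {w : ℂ} (h : (w + w⁻¹).im ≠ 0) : ‖w‖ ≠ 1 := by
  intro hw
  rw [im_add_inv, normSq_eq_norm_sq, hw] at h
  norm_num at h

lemma Complex.im_ne_zero_of_add_inv_eq_ofReal {w : ℂ} {s : ℝ} (hw : w ≠ 0) (hs : |s| < 2)
    (h : w + w⁻¹ = s) : w.im ≠ 0 := by
  intro him
  have hquad : w ^ 2 - s * w + 1 = 0 := by
    rw [← h]; field_simp; ring
  rw [← re_add_im w, him, ofReal_zero, zero_mul, add_zero] at hquad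
  have hr : w.re ^ 2 - s * w.re + 1 = 0 := by exact_mod_cast hquad
  nlinarith [abs_lt.mp hs, sq_nonneg (2 * w.re - s)]

lemma Complex.norm_eq_one_of_add_inv_eq_ofReal {w : ℂ} {s : ℝ} (hw : w ≠ 0) (hs : |s| < 2)
    (h : w + w⁻¹ = s) : ‖w‖ = 1 := by
  have h₀ : (w + w⁻¹).im = 0 := by rw [h, ofReal_im]
  rw [im_add_inv, mul_eq_zero, sub_eq_zero] at h₀
  have h₁ := h₀.resolve_left (im_ne_zero_of_add_inv_eq_ofReal hw hs h)
  rwa [eq_comm, inv_eq_one, normSq_eq_norm_sq,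
    pow_eq_one_iff_of_nonneg (norm_nonneg w) two_ne_zero] at h₁

lemma sq_sub_add_inv_mul_add_one {K : Type*} [Field K] {w : K} (hw : w ≠ 0) (z : K) :
    z ^ 2 - (w + w⁻¹) * z + 1 = (z - w) * (z - w⁻¹) := by
  field_simp
  ring

lemma exists_add_inv_eq {K : Type*} [Field K] [IsAlgClosed K] (s : K) :
    ∃ w : K, w ≠ 0 ∧ w + w⁻¹ = s := by
  have hdeg : (X ^ 2 - C s * X + 1 : K[X]).degree = 2 := by compute_degree!
  obtain ⟨w, hw⟩ := IsAlgClosed.exists_root _ (hdeg ▸ two_ne_zero)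
  simp only [IsRoot, eval_add, eval_sub, eval_pow, eval_mul, eval_C, eval_X, eval_one] at hw
  have hw₀ : w ≠ 0 := by rintro rfl; simp at hw
  refine ⟨w, hw₀, ?_⟩
  field_simp
  linear_combination hw

lemma Complex.exists_one_lt_norm_add_inv_eq {s : ℂ} (hs : s.im ≠ 0) :
    ∃ α : ℂ, 1 < ‖α‖ ∧ α + α⁻¹ = s := by
  obtain ⟨w, hw₀, hw⟩ := exists_add_inv_eq s
  have hw₁ := norm_ne_one_of_im_add_inv_ne_zero (hw ▸ hs)
  rcases hw₁.lt_or_gt with hlt | hgt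
  · refine ⟨w⁻¹, ?_, by rw [inv_inv, add_comm, hw]⟩
    rw [norm_inv]
    exact one_lt_inv_iff₀.2 ⟨norm_pos_iff.2 hw₀, hlt⟩
  · exact ⟨w, hgt, hw⟩

lemma Complex.exists_im_ne_zero_add_conj_eq_and_mul_conj_eq {b c : ℝ} (h : b ^ 2 < 4 * c) :
    ∃ s : ℂ, s.im ≠ 0 ∧ s + conj s = -b ∧ s * conj s = c := by
  have hd : √(4 * c - b ^ 2) ^ 2 = 4 * c - b ^ 2 := Real.sq_sqrt (by linarith)
  have hd₀ : 0 < √(4 * c - b ^ 2) := Real.sqrt_pos.2 (by linarith)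
  refine ⟨⟨-b / 2, √(4 * c - b ^ 2) / 2⟩, by simp [hd₀.ne'], ?_, ?_⟩
  · apply Complex.ext <;> simp
  · rw [mul_conj, normSq_mk]
    norm_cast
    linear_combination hd / 4

lemma Polynomial.Monic.irreducible_of_aeval_eq_zero_of_natDegree_le {K L : Type*} [Field K]
    [Field L] [Algebra K L] {p : K[X]} {x : L} (hp : p.Monic) (hx : aeval x p = 0)
    (hdeg : p.natDegree ≤ (minpoly K x).natDegree) : Irreducible p := by
  have hint : IsIntegral K x := ⟨p, hp, hx⟩
  rw [eq_of_monic_of_dvd_of_natDegree_le (minpoly.monic hint) hp (minpoly.dvd K x hx) hdeg]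
  exact minpoly.irreducible hint

theorem IntermediateField.finrank_adjoin_ofReal_ne {K : Type*} [Field K] [Algebra K ℝ]
    [Algebra K ℂ] [IsScalarTower K ℝ ℂ] {x : ℂ} {s : ℝ} (hx : IsIntegral K x) (him : x.im ≠ 0)
    (hs : (s : ℂ) ∈ K⟮x⟯) :
    finrank K K⟮(s : ℂ)⟯ ≠ finrank K K⟮x⟯ := by
  intro h
  have := adjoin.finiteDimensional hx
  have heq := eq_of_le_of_finrank_eq (adjoin_simple_le_iff.2 hs) h
  have hreal : K⟮(s : ℂ)⟯ ≤ (ofRealAm.restrictScalars K).fieldRange :=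
    adjoin_simple_le_iff.2 ⟨s, rfl⟩
  obtain ⟨r, hr⟩ := hreal (heq ▸ mem_adjoin_simple_self K x)
  exact him (hr ▸ ofReal_im r)

lemma exists_mem_Ioo_cubic_eq_zero :
    ∃ s ∈ Set.Ioo (9 / 5 : ℝ) 2, s ^ 3 + s ^ 2 - 3 * s - 4 = 0 := by
  have hcont : ContinuousOn (fun s : ℝ => s ^ 3 + s ^ 2 - 3 * s - 4) (Set.Icc (9 / 5) 2) := by
    fun_prop
  exact intermediate_value_Ioo (by norm_num) hcont (show (0 : ℝ) ∈ Set.Ioo _ _ by norm_num)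

lemma irreducible_cubic : Irreducible (X ^ 3 + X ^ 2 - 3 * X - 4 : ℚ[X]) := by
  have hdeg : (X ^ 3 + X ^ 2 - 3 * X - 4 : ℚ[X]).natDegree = 3 := by compute_degree!
  refine irreducible_of_degree_le_three_of_not_isRoot (by simp [hdeg]) fun q hq => ?_
  have hq' : aeval q (X ^ 3 + X ^ 2 - 3 * X - 4 : ℤ[X]) = 0 := by simpa [map_ofNat] using hq
  obtain ⟨m, rfl, hm⟩ := exists_integer_of_is_root_of_monic (by monicity!) hq'
  have hm' : ((m ^ 3 + m ^ 2 - 3 * m - 4 : ℤ) : ℚ) = 0 := by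
    push_cast
    simpa [map_ofNat] using hq'
  have h4 : m ∣ 4 := by simpa using hm
  have hle := Int.le_of_dvd four_pos h4
  have hge : -4 ≤ m := by linarith [Int.le_of_dvd four_pos (neg_dvd.2 h4)]
  interval_cases m <;> norm_num at hm'

lemma chi_eq_pow_three_mul_cubic {K : Type*} [Field K] {z : K} (hz : z ≠ 0) :
    z ^ 6 + z ^ 5 - 2 * z ^ 3 + z + 1 =
      z ^ 3 * ((z + z⁻¹) ^ 3 + (z + z⁻¹) ^ 2 - 3 * (z + z⁻¹) - 4) := by
  field_simp
  ring

lemma chi_eq_mul_of_cubic_root {R : Type*} [CommRing R] {a b c : R}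
    (ha : a ^ 3 + a ^ 2 - 3 * a - 4 = 0) (hsum : b + c = -(1 + a)) (hprod : b * c = a ^ 2 + a - 3)
    (z : R) :
    z ^ 6 + z ^ 5 - 2 * z ^ 3 + z + 1 =
      (z ^ 2 - a * z + 1) * (z ^ 2 - b * z + 1) * (z ^ 2 - c * z + 1) := by
  linear_combination z ^ 3 * ha + (z ^ 2 - a * z + 1) * ((z ^ 3 + z) * hsum - z ^ 2 * hprod)

lemma irreducible_chi_of_root {β : ℂ} {s : ℝ} (hroot : β ^ 6 + β ^ 5 - 2 * β ^ 3 + β + 1 = 0)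
    (him : β.im ≠ 0) (hs : β + β⁻¹ = s) :
    Irreducible (X ^ 6 + X ^ 5 - 2 * X ^ 3 + X + 1 : ℚ[X]) := by
  have hβ₀ : β ≠ 0 := fun h => him (by simp [h])
  have hmonic : (X ^ 6 + X ^ 5 - 2 * X ^ 3 + X + 1 : ℚ[X]).Monic := by monicity!
  have hβroot : aeval β (X ^ 6 + X ^ 5 - 2 * X ^ 3 + X + 1 : ℚ[X]) = 0 := by
    simpa [map_ofNat] using hroot
  have hsroot : aeval (s : ℂ) (X ^ 3 + X ^ 2 - 3 * X - 4 : ℚ[X]) = 0 := by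
    have h := chi_eq_pow_three_mul_cubic hβ₀
    rw [hroot, hs, eq_comm, mul_eq_zero] at h
    simpa [map_ofNat] using h.resolve_left (pow_ne_zero 3 hβ₀)
  have hβint : IsIntegral ℚ β := ⟨_, hmonic, hβroot⟩
  have hs₃ : finrank ℚ ℚ⟮(s : ℂ)⟯ = 3 := by
    rw [adjoin.finrank ⟨_, by monicity!, hsroot⟩,
      ← minpoly.eq_of_irreducible_of_monic irreducible_cubic hsroot (by monicity!)]
    compute_degree!
  have hmem : (s : ℂ) ∈ ℚ⟮β⟯ :=
    hs ▸ add_mem (mem_adjoin_simple_self ℚ β) (inv_mem (mem_adjoin_simple_self ℚ β))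
  have hdvd : 3 ∣ finrank ℚ ℚ⟮β⟯ := hs₃ ▸ finrank_dvd_of_le_right (adjoin_simple_le_iff.2 hmem)
  have hne : finrank ℚ ℚ⟮β⟯ ≠ 3 := hs₃ ▸ (finrank_adjoin_ofReal_ne hβint him hmem).symm
  have hle : (minpoly ℚ β).natDegree ≤ 6 :=
    (natDegree_le_of_dvd (minpoly.dvd ℚ β hβroot) hmonic.ne_zero).trans (by compute_degree!)
  have hpos := minpoly.natDegree_pos hβint
  rw [adjoin.finrank hβint] at hdvd hne
  refine hmonic.irreducible_of_aeval_eq_zero_of_natDegree_le hβroot ?_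
  obtain ⟨k, hk⟩ := hdvd
  have : (X ^ 6 + X ^ 5 - 2 * X ^ 3 + X + 1 : ℚ[X]).natDegree = 6 := by compute_degree!
  omega

theorem stmt_18 :
    (∀ t : ℂ, t ≠ 0 →
      t ^ 6 * ((t⁻¹) ^ 6 + (t⁻¹) ^ 5 - 2 * (t⁻¹) ^ 3 + t⁻¹ + 1) =
        t ^ 6 + t ^ 5 - 2 * t ^ 3 + t + 1) ∧
    Irreducible (X ^ 6 + X ^ 5 - 2 * X ^ 3 + X + 1 : ℚ[X]) ∧
    ∃ α β γ : ℂ, 1 < ‖α‖ ∧ α.im ≠ 0 ∧ ‖β‖ = 1 ∧ β.im ≠ 0 ∧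
      ‖γ‖ < 1 ∧ γ.im ≠ 0 ∧
      ∀ z : ℂ, z ^ 6 + z ^ 5 - 2 * z ^ 3 + z + 1 = 0 ↔
        z ∈ ({α, (starRingEnd ℂ) α, β, (starRingEnd ℂ) β, γ, (starRingEnd ℂ) γ} : Set ℂ) := by
  obtain ⟨s₀, ⟨hs₀l, hs₀u⟩, hs₀⟩ := exists_mem_Ioo_cubic_eq_zero
  have hs₀abs : |s₀| < 2 := abs_lt.2 ⟨by linarith, hs₀u⟩
  obtain ⟨s₁, hs₁im, hsum, hprod⟩ :=
    exists_im_ne_zero_add_conj_eq_and_mul_conj_eq (b := 1 + s₀) (c := s₀ ^ 2 + s₀ - 3) (by nlinarith)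
  obtain ⟨β, hβ₀, hβ⟩ := exists_add_inv_eq (s₀ : ℂ)
  have hβim := im_ne_zero_of_add_inv_eq_ofReal hβ₀ hs₀abs hβ
  have hβnorm := norm_eq_one_of_add_inv_eq_ofReal hβ₀ hs₀abs hβ
  obtain ⟨α, hα, hαs⟩ := exists_one_lt_norm_add_inv_eq hs₁im
  have hα₀ : α ≠ 0 := norm_pos_iff.1 (one_pos.trans hα)
  set γ := (conj α)⁻¹ with hγ
  have hγs : γ + γ⁻¹ = conj s₁ := by rw [hγ, inv_inv, add_comm, ← map_inv₀, ← map_add, hαs]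
  have hfactor (z : ℂ) : z ^ 6 + z ^ 5 - 2 * z ^ 3 + z + 1 =
      (z - α) * (z - conj α) * (z - β) * (z - conj β) * (z - γ) * (z - conj γ) := by
    have hs₀C : (s₀ : ℂ) ^ 3 + s₀ ^ 2 - 3 * s₀ - 4 = 0 := by exact_mod_cast hs₀
    rw [chi_eq_mul_of_cubic_root hs₀C (by exact_mod_cast hsum) (by exact_mod_cast hprod), ← hβ,
      ← hγs, ← hαs, sq_sub_add_inv_mul_add_one hβ₀, sq_sub_add_inv_mul_add_one hα₀,
      sq_sub_add_inv_mul_add_one (inv_ne_zero ((_root_.map_ne_zero _).2 hα₀)),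
      inv_eq_conj hβnorm, hγ, inv_inv, map_inv₀,
      Complex.conj_conj]
    ring
  refine ⟨fun t ht => by field_simp; ring, irreducible_chi_of_root (by simp [hfactor]) hβim hβ,
    α, β, γ, hα, im_ne_zero_of_im_add_inv_ne_zero (hαs ▸ hs₁im),
    hβnorm, hβim, ?_,
    im_ne_zero_of_im_add_inv_ne_zero (hγs ▸ by simpa using hs₁im), fun z => ?_⟩
  · rw [hγ, norm_inv, norm_conj]
    exact inv_lt_one_of_one_lt₀ hα
  · simp only [hfactor, mul_eq_zero, sub_eq_zero, Set.mem_insert_iff, Set.mem_singleton_iff,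
      or_assoc]
end
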